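/- For the system q̇ = 4Hz, ż = (1/2) sgn(q) e^{−|q|} (the b = 3/2 head-on collision system in inverse-momentum variables), with H = c² and shifted collision time t_c, the functions q(t) = −2 log(sech(c(t − t_c))) and z(t) = tanh(c(t − t_c))/(2c) form an exact solution for t ≠ t_c, and this solution extends continuously through t = t_c with q(t_c) = 0, z(t_c) = 0. -/

import Mathlib

/-! With `u = c (t - t_c)` one has `q = 2 log cosh u` and `z = tanh u / (2c)`, so
`q̇ = 2c tanh u = 4c² z`. For `t ≠ t_c` we have `cosh u > 1`, hence `q > 0`, and the force is
`(1/2) e^{-q} = (1/2) sech² u`, which is exactly `ż`. -/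

namespace Real

theorem continuous_tanh : Continuous tanh := by
  simp only [funext tanh_eq_sinh_div_cosh]
  exact continuous_sinh.div continuous_cosh fun x => (cosh_pos x).ne'

theorem hasDerivAt_tanh (x : ℝ) : HasDerivAt tanh (cosh x ^ 2)⁻¹ x := by
  have h := (hasDerivAt_sinh x).div (hasDerivAt_cosh x) (cosh_pos x).ne'
  rw [show sinh / cosh = tanh from funext fun y => (tanh_eq_sinh_div_cosh y).symm] at h
  refine h.congr_deriv ?_
  field_simp
  linear_combination cosh_sq_sub_sinh_sq x

theorem hasDerivAt_log_cosh (x : ℝ) : HasDerivAt (fun y => log (cosh y)) (tanh x) x :=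
  ((hasDerivAt_cosh x).log (cosh_pos x).ne').congr_deriv (tanh_eq_sinh_div_cosh x).symm

theorem log_cosh_pos {x : ℝ} (hx : x ≠ 0) : 0 < log (cosh x) :=
  log_pos (one_lt_cosh.mpr hx)

theorem neg_two_mul_log_one_div_cosh (x : ℝ) : -2 * log (1 / cosh x) = 2 * log (cosh x) := by
  rw [one_div, log_inv]
  ring

theorem exp_neg_two_mul_log_cosh (x : ℝ) : exp (-(2 * log (cosh x))) = (cosh x ^ 2)⁻¹ := by
  rw [exp_neg, ← Nat.cast_ofNat, ← log_pow, exp_log (pow_pos (cosh_pos x) 2)]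

end Real

open Real

/-- For the `b = 3/2` head-on collision system in inverse-momentum variables,
`q̇ = 4Hz`, `ż = (1/2) sgn(q) e^{−|q|}` with `H = c²`, the functions
`q(t) = −2 log(sech(c(t−t_c)))`, `z(t) = tanh(c(t−t_c))/(2c)` solve the system
for `t ≠ t_c` and extend continuously through `t = t_c` with
`q(t_c) = 0`, `z(t_c) = 0`. -/
theorem exact_head_on_solution_inverse_momentum
    (c t_c : ℝ) (hc : 0 < c) :
    let H : ℝ := c ^ 2
    let q : ℝ → ℝ := fun t => -2 * Real.log (1 / Real.cosh (c * (t - t_c)))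
    let z : ℝ → ℝ := fun t => Real.tanh (c * (t - t_c)) / (2 * c)
    (∀ t : ℝ, t ≠ t_c →
      HasDerivAt q (4 * H * z t) t ∧
      HasDerivAt z ((1 / 2 : ℝ) * Real.sign (q t) * Real.exp (-|q t|)) t) ∧
    q t_c = 0 ∧ z t_c = 0 ∧ Continuous q ∧ Continuous z := by
  intro H q z
  have hu (t : ℝ) : HasDerivAt (fun t => c * (t - t_c)) c t := by
    simpa using ((hasDerivAt_id t).sub_const t_c).const_mul c
  have hq : q = fun t => 2 * log (cosh (c * (t - t_c))) :=
    funext fun t => neg_two_mul_log_one_div_cosh _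
  refine ⟨fun t ht => ⟨?_, ?_⟩, by simp [q], by simp [z], ?_, ?_⟩
  · rw [hq]
    refine (((hasDerivAt_log_cosh _).comp t (hu t)).const_mul 2).congr_deriv ?_
    simp only [z, H]
    field_simp
    ring
  · have hq_pos : 0 < q t := by
      rw [hq]
      exact mul_pos two_pos (log_cosh_pos (mul_ne_zero hc.ne' (sub_ne_zero.mpr ht)))
    rw [sign_of_pos hq_pos, abs_of_pos hq_pos, hq, exp_neg_two_mul_log_cosh]
    refine (((hasDerivAt_tanh _).comp t (hu t)).div_const (2 * c)).congr_deriv ?_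
    field_simp
  · rw [hq]
    exact continuous_const.mul
      ((continuous_cosh.comp (by fun_prop)).log fun t => (cosh_pos _).ne')
  · exact (continuous_tanh.comp (by fun_prop)).div_const _
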